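/- arXiv:2109.13585 — 2 statements merged into one kernel-verified Lean document; each statement's English description precedes it below -/
import Mathlib

section
/- Let σ, τ ∈ S_n and set i = σ⁻¹(n-1), j = τ⁻¹(n-1), a = τ(i), b = σ(j), c = σ(n-1), d = τ(n-1). If i, j, n-1 are pairwise distinct, a = c, and b ≠ d, then hd(σ,τ) − hd(σ^CT, τ^CT) = 2. -/
/-- Hamming distance between two permutations of `Fin n`. -/
def hd {n : ℕ} (σ τ : Equiv.Perm (Fin n)) : ℕ :=
  (Finset.univ.filter fun x => σ x ≠ τ x).card

/-- Contraction of a permutation: delete the symbol `n` (the largest one)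
from the cycle decomposition of `σ`. -/
def contract {n : ℕ} (σ : Equiv.Perm (Fin (n + 1))) : Equiv.Perm (Fin n) :=
  Equiv.removeNone (finSuccEquivLast.permCongr σ)

/-- Extension of a permutation of `Fin n` to a permutation of `Fin (n+1)`
fixing the last symbol. -/
def extendPerm {n : ℕ} (π : Equiv.Perm (Fin n)) : Equiv.Perm (Fin (n + 1)) :=
  finSuccEquivLast.permCongr.symm (Equiv.optionCongr π)

/-- `m`-fold iterated contraction. -/
def contractIter : ∀ (m : ℕ) {n : ℕ}, Equiv.Perm (Fin (n + m)) → Equiv.Perm (Fin n)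
  | 0, _, σ => σ
  | m + 1, _, σ => contractIter m (contract σ)

/-- Hamming distance of a permutation array: the minimum Hamming distance
between distinct elements. -/
noncomputable def hdP {n : ℕ} (P : Set (Equiv.Perm (Fin n))) : ℕ :=
  sInf {d | ∃ σ ∈ P, ∃ τ ∈ P, σ ≠ τ ∧ hd σ τ = d}

lemma contract_apply_of_ne {n : ℕ} (σ : Equiv.Perm (Fin (n+1))) (x : Fin n)
    (h : σ x.castSucc ≠ Fin.last n) : (contract σ x).castSucc = σ x.castSucc := by
  obtain ⟨y, hy⟩ := Fin.eq_castSucc_of_ne_last h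
  have he : (finSuccEquivLast.permCongr σ) (some x) = some y := by
    simp [Equiv.permCongr_apply, ← hy]
  have := Equiv.removeNone_some (finSuccEquivLast.permCongr σ) ⟨y, he⟩
  rw [he] at this
  simpa [contract, ← hy] using congrArg (fun o => o.elim (Fin.last n) Fin.castSucc) this

lemma contract_apply_of_eq {n : ℕ} (σ : Equiv.Perm (Fin (n+1))) (x : Fin n)
    (h : σ x.castSucc = Fin.last n) : (contract σ x).castSucc = σ (Fin.last n) := by
  have he : (finSuccEquivLast.permCongr σ) (some x) = none := by
    simp [Equiv.permCongr_apply, h]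
  have := Equiv.removeNone_none (finSuccEquivLast.permCongr σ) he
  have h2 : (finSuccEquivLast.permCongr σ) none = finSuccEquivLast (σ (Fin.last n)) := by
    simp [Equiv.permCongr_apply]
  rw [h2] at this
  have hne : σ (Fin.last n) ≠ Fin.last n := by
    intro hl
    exact absurd (σ.injective (h.trans hl.symm)) (Fin.castSucc_lt_last x).ne
  obtain ⟨y, hy⟩ := Fin.eq_castSucc_of_ne_last hne
  rw [← hy, finSuccEquivLast_castSucc] at this
  simpa [contract, ← hy] using congrArg (fun o => o.elim (Fin.last n) Fin.castSucc) this


theorem hd_sub_hd_contract_eq_two_of (n : ℕ) (σ τ : Equiv.Perm (Fin (n + 1)))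
    (hij : σ⁻¹ (Fin.last n) ≠ τ⁻¹ (Fin.last n))
    (hi : σ⁻¹ (Fin.last n) ≠ Fin.last n) (hj : τ⁻¹ (Fin.last n) ≠ Fin.last n)
    (hac : τ (σ⁻¹ (Fin.last n)) = σ (Fin.last n))
    (hbd : σ (τ⁻¹ (Fin.last n)) ≠ τ (Fin.last n)) :
    (hd σ τ : ℤ) - (hd (contract σ) (contract τ) : ℤ) = 2 := by
  set i := σ⁻¹ (Fin.last n) with hidef
  set j := τ⁻¹ (Fin.last n) with hjdef
  have hσi : σ i = Fin.last n := σ.apply_symm_apply _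
  have hτj : τ j = Fin.last n := τ.apply_symm_apply _
  have key : hd σ τ = hd (contract σ) (contract τ) + 2 := by
    have h1 : hd σ τ = (∑ x : Fin n, if σ x.castSucc ≠ τ x.castSucc then 1 else 0) +
        (if σ (Fin.last n) ≠ τ (Fin.last n) then 1 else 0) := by
      rw [hd, Finset.card_filter, Fin.sum_univ_castSucc]
    have hlast : σ (Fin.last n) ≠ τ (Fin.last n) := by
      intro h
      exact hi (τ.injective (hac.trans h))
    rw [h1, if_pos hlast]
    have h2 : ∀ x : Fin n, (if σ x.castSucc ≠ τ x.castSucc then 1 else 0) =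
        (if contract σ x ≠ contract τ x then 1 else 0) +
        (if x.castSucc = i then 1 else 0) := by
      intro x
      by_cases hxi : x.castSucc = i
      · have hσx : σ x.castSucc = Fin.last n := by rw [hxi, hσi]
        have hτx : τ x.castSucc ≠ Fin.last n := by
          rw [hxi]; intro h
          exact hij (τ.injective (h.trans hτj.symm) ▸ rfl)
        have hc1 : (contract σ x).castSucc = σ (Fin.last n) := contract_apply_of_eq σ x hσx
        have hc2 : (contract τ x).castSucc = τ x.castSucc := contract_apply_of_ne τ x hτx
        have heq : contract σ x = contract τ x := by
          apply Fin.castSucc_injective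
          rw [hc1, hc2, hxi, hac]
        have hne : σ i ≠ τ i := by
          rw [hσi]; exact fun h => hij (τ.injective (h.symm.trans hτj.symm))
        simp [heq, hxi, hne]
      · by_cases hxj : x.castSucc = j
        · have hτx : τ x.castSucc = Fin.last n := by rw [hxj, hτj]
          have hσx : σ x.castSucc ≠ Fin.last n := by
            rw [hxj]; intro h
            exact hij ((σ.injective (h.trans hσi.symm)) ▸ rfl)
          have hc1 : (contract σ x).castSucc = σ x.castSucc := contract_apply_of_ne σ x hσx
          have hc2 : (contract τ x).castSucc = τ (Fin.last n) := contract_apply_of_eq τ x hτx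
          have hne : contract σ x ≠ contract τ x := by
            intro h
            apply hbd
            rw [← hxj, ← hc1, h, hc2]
          have hne2 : σ x.castSucc ≠ τ x.castSucc := by rw [hτx]; exact hσx
          simp [hne, hne2, hxi]
        · have hσx : σ x.castSucc ≠ Fin.last n := by
            intro h
            exact hxi (by rw [hidef, ← h, Equiv.Perm.inv_def, σ.symm_apply_apply])
          have hτx : τ x.castSucc ≠ Fin.last n := by
            intro h
            exact hxj (by rw [hjdef, ← h, Equiv.Perm.inv_def, τ.symm_apply_apply])
          have hc1 : (contract σ x).castSucc = σ x.castSucc := contract_apply_of_ne σ x hσx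
          have hc2 : (contract τ x).castSucc = τ x.castSucc := contract_apply_of_ne τ x hτx
          have hiff : (contract σ x ≠ contract τ x) ↔ (σ x.castSucc ≠ τ x.castSucc) := by
            rw [← hc1, ← hc2]
            exact not_congr ⟨fun h => h ▸ rfl, fun h => Fin.castSucc_injective _ h⟩
          simp only [hxi, if_false, add_zero]
          by_cases h : σ x.castSucc = τ x.castSucc <;> simp [h, hiff]
    rw [Finset.sum_congr rfl (fun x _ => h2 x), Finset.sum_add_distrib]
    have h3 : (∑ x : Fin n, if contract σ x ≠ contract τ x then 1 else 0) =
        hd (contract σ) (contract τ) := by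
      rw [hd, Finset.card_filter]
    obtain ⟨i', hi'⟩ := Fin.eq_castSucc_of_ne_last hi
    have h4 : (∑ x : Fin n, if x.castSucc = i then 1 else 0) = 1 := by
      have : ∀ x : Fin n, (if x.castSucc = i then (1:ℕ) else 0) = if x = i' then 1 else 0 := by
        intro x
        rw [← hi']
        exact if_congr ⟨fun hh => Fin.castSucc_injective _ hh, fun hh => hh ▸ rfl⟩ rfl rfl
      rw [Finset.sum_congr rfl (fun x _ => this x), Finset.sum_ite_eq' Finset.univ i' (fun _ => 1),
        if_pos (Finset.mem_univ i')]
    rw [h3, h4]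
  rw [key]; push_cast; ring
end

section
/- If σ, τ ∈ S_n satisfy hd(σ,τ) − hd(σ^CT, τ^CT) = 3, then (σ^CT)⁻¹ τ^CT = σ⁻¹τ ρ⁻¹, where ρ is the 3-cycle (n-1, σ(n-1), τ(n-1)). -/
lemma Equiv.Perm.inv_apply_self {α : Type*} (f : Equiv.Perm α) (x : α) : f⁻¹ (f x) = x :=
  Equiv.symm_apply_apply f x

lemma Equiv.Perm.apply_inv_self {α : Type*} (f : Equiv.Perm α) (x : α) : f (f⁻¹ x) = x :=
  Equiv.apply_symm_apply f x

lemma extendPerm_last {n : ℕ} (π : Equiv.Perm (Fin n)) :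
    extendPerm π (Fin.last n) = Fin.last n := by
  simp [extendPerm, Equiv.permCongr_apply]

lemma extendPerm_castSucc {n : ℕ} (π : Equiv.Perm (Fin n)) (i : Fin n) :
    extendPerm π (Fin.castSucc i) = Fin.castSucc (π i) := by
  simp [extendPerm, Equiv.permCongr_apply]

lemma extend_contract {n : ℕ} (σ : Equiv.Perm (Fin (n + 1))) :
    extendPerm (contract σ) = Equiv.swap (Fin.last n) (σ (Fin.last n)) * σ := by
  ext x
  induction x using Fin.lastCases with
  | last =>
      rw [extendPerm_last, Equiv.Perm.mul_apply, Equiv.swap_apply_right]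
  | cast i =>
      rw [extendPerm_castSucc, Equiv.Perm.mul_apply]
      by_cases hs : σ (Fin.castSucc i) = Fin.last n
      · have h1 : finSuccEquivLast.permCongr σ (some i) = none := by
          simp [Equiv.permCongr_apply, hs]
        have h2 := Equiv.removeNone_none _ h1
        rw [show (finSuccEquivLast.permCongr σ) none = finSuccEquivLast (σ (Fin.last n)) by
          simp [Equiv.permCongr_apply]] at h2
        have h3 : σ (Fin.last n) ≠ Fin.last n := by
          intro hc
          exact (Fin.castSucc_lt_last i).ne (σ.injective (hs.trans hc.symm))
        obtain ⟨j, hj⟩ := Fin.eq_castSucc_of_ne_last h3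
        rw [← hj, finSuccEquivLast_castSucc] at h2
        have h4 : (contract σ) i = j := Option.some_injective _ h2
        rw [hs, Equiv.swap_apply_left]
        exact congrArg Fin.val ((congrArg Fin.castSucc h4).trans hj)
      · have h1 : finSuccEquivLast.permCongr σ (some i) =
            finSuccEquivLast (σ (Fin.castSucc i)) := by
          simp [Equiv.permCongr_apply]
        obtain ⟨j, hj⟩ := Fin.eq_castSucc_of_ne_last hs
        have h2 := Equiv.removeNone_some (finSuccEquivLast.permCongr σ)
          ⟨j, by rw [h1, ← hj, finSuccEquivLast_castSucc]⟩
        rw [h1, ← hj, finSuccEquivLast_castSucc] at h2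
        have h4 : (contract σ) i = j := Option.some_injective _ h2
        have h5 : σ (Fin.castSucc i) ≠ σ (Fin.last n) :=
          fun hc => (Fin.castSucc_lt_last i).ne (σ.injective hc)
        rw [Equiv.swap_apply_of_ne_of_ne hs h5]
        exact congrArg Fin.val ((congrArg Fin.castSucc h4).trans hj)

lemma key_swap {α : Type*} [DecidableEq α] (π : Equiv.Perm α) (a b c : α)
    (hab : a ≠ b) (hac : a ≠ c) (hbc : b ≠ c)
    (h1 : π a = b) (h2 : π b = c) (h3 : π c = a) :
    Equiv.swap a c * π * Equiv.swap a b = Equiv.swap b c * (Equiv.swap a b * π) := by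
  ext x
  simp only [Equiv.Perm.mul_apply]
  rcases eq_or_ne x a with rfl | hxa
  · simp [Equiv.swap_apply_def, h1, h2, hab, hac, hbc, hab.symm, hac.symm, hbc.symm]
  rcases eq_or_ne x b with rfl | hxb
  · simp [Equiv.swap_apply_def, h1, h2, hab, hac, hbc, hab.symm, hac.symm, hbc.symm, hxa]
  rcases eq_or_ne x c with rfl | hxc
  · simp [Equiv.swap_apply_def, h1, h3, hab, hac, hbc, hab.symm, hac.symm, hbc.symm, hxa, hxb]
  · have hpa : π x ≠ a := fun h => hxc (π.injective (h.trans h3.symm))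
    have hpb : π x ≠ b := fun h => hxa (π.injective (h.trans h1.symm))
    have hpc : π x ≠ c := fun h => hxb (π.injective (h.trans h2.symm))
    simp [Equiv.swap_apply_def, hxa, hxb, hxc, hpa, hpb, hpc]

theorem contract_mul_eq_of_hd_sub_eq_three (n : ℕ) (σ τ : Equiv.Perm (Fin (n + 1)))
    (h : (hd σ τ : ℤ) - (hd (contract σ) (contract τ) : ℤ) = 3) :
    extendPerm (contract τ) * (extendPerm (contract σ))⁻¹ =
      (Equiv.swap (Fin.last n) (σ (Fin.last n)) *
          Equiv.swap (σ (Fin.last n)) (τ (Fin.last n)))⁻¹ * (τ * σ⁻¹) := by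
  set L := Fin.last n with hL
  set s := σ L with hs
  set t := τ L with ht
  set F : Finset (Fin (n + 1)) := Finset.univ.filter fun x => σ x ≠ τ x with hF
  set G : Finset (Fin (n + 1)) :=
    Finset.univ.filter fun x => (Equiv.swap L s * σ) x ≠ (Equiv.swap L t * τ) x with hG
  -- hd of contractions equals G.card
  have hGL : L ∉ G := by
    simp only [hG, Finset.mem_filter]
    simp only [hG, Finset.mem_filter, Equiv.Perm.mul_apply, ← hs, ← ht,
      Equiv.swap_apply_right, Finset.mem_univ, true_and, ne_eq, not_not]
  have hEσ : Equiv.swap L s * σ = extendPerm (contract σ) := (extend_contract σ).symm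
  have hEτ : Equiv.swap L t * τ = extendPerm (contract τ) := (extend_contract τ).symm
  have hGcard : hd (contract σ) (contract τ) = G.card := by
    apply Finset.card_bij (fun a _ => Fin.castSucc a)
    · intro a ha
      simp only [hd, Finset.mem_filter, Finset.mem_univ, true_and] at ha
      simp only [hG, Finset.mem_filter, Finset.mem_univ, true_and]
      rw [hEσ, hEτ, extendPerm_castSucc, extendPerm_castSucc]
      exact fun hc => ha (Fin.castSucc_injective n hc)
    · intro a _ b _ hab
      exact Fin.castSucc_injective n hab
    · intro b hb
      have hbL : b ≠ L := fun hc => hGL (hc ▸ hb)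
      obtain ⟨a, ha⟩ := Fin.eq_castSucc_of_ne_last hbL
      refine ⟨a, ?_, ha⟩
      simp only [hG, Finset.mem_filter, Finset.mem_univ, true_and] at hb
      rw [hEσ, hEτ, ← ha, extendPerm_castSucc, extendPerm_castSucc] at hb
      simp only [hd, Finset.mem_filter, Finset.mem_univ, true_and]
      exact fun hc => hb (congrArg Fin.castSucc hc)
  have hFcard : hd σ τ = F.card := rfl
  rw [hFcard, hGcard] at h
  -- the set of points where membership in F and G may differ
  set A : Finset (Fin (n + 1)) := {τ⁻¹ L, L, τ⁻¹ s} with hA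
  have hkey : ∀ x ∉ A, (x ∈ F ↔ x ∈ G) := by
    intro x hx
    simp only [hA, Finset.mem_insert, Finset.mem_singleton, not_or] at hx
    obtain ⟨hx1, hx2, hx3⟩ := hx
    have hτL : τ x ≠ L := fun hc => hx1 (by rw [← hc, Equiv.Perm.inv_apply_self])
    have hτt : τ x ≠ t := fun hc => hx2 (τ.injective hc)
    have hτs : τ x ≠ s := fun hc => hx3 (by rw [← hc, Equiv.Perm.inv_apply_self])
    have hσ : Equiv.swap L t (τ x) = τ x := Equiv.swap_apply_of_ne_of_ne hτL hτt
    simp only [hF, hG, Finset.mem_filter]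
    simp only [hF, hG, Finset.mem_filter, Finset.mem_univ, true_and, Equiv.Perm.mul_apply, hσ]
    constructor
    · intro hne hc
      apply hne
      have := congrArg (Equiv.swap L s) hc
      rw [Equiv.swap_apply_self, Equiv.swap_apply_of_ne_of_ne hτL hτs] at this
      exact this
    · intro hne hc
      exact hne (by rw [hc, Equiv.swap_apply_of_ne_of_ne hτL hτs])
  have hsdiff : F \ A = G \ A := by
    ext x
    simp only [Finset.mem_sdiff]
    exact and_congr_left fun hx => hkey x hx
  have hFsplit : (F ∩ A).card + (F \ A).card = F.card := Finset.card_inter_add_card_sdiff F A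
  have hGsplit : (G ∩ A).card + (G \ A).card = G.card := Finset.card_inter_add_card_sdiff G A
  have hAcard : A.card ≤ 3 := by
    apply le_trans (Finset.card_insert_le _ _)
    have := Finset.card_insert_le L {τ⁻¹ s}
    simp only [Finset.card_singleton] at this
    omega
  have hFA : (F ∩ A).card ≤ A.card := Finset.card_le_card (Finset.inter_subset_right)
  have hFA3 : (F ∩ A).card = 3 ∧ (G ∩ A).card = 0 := by
    rw [← hFsplit, ← hGsplit, hsdiff] at h
    omega
  have hA3 : A.card = 3 := le_antisymm hAcard (hFA3.1 ▸ hFA)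
  have hGA : ∀ x ∈ A, x ∉ G := by
    intro x hxA hxG
    have : x ∈ G ∩ A := Finset.mem_inter.mpr ⟨hxG, hxA⟩
    rw [Finset.card_eq_zero] at hFA3
    exact absurd (hFA3.2 ▸ this) (Finset.notMem_empty x)
  -- distinctness of L, s, t
  have hd1 : τ⁻¹ L ≠ L := by
    intro heq
    have : A = {L, τ⁻¹ s} := by rw [hA, heq, Finset.insert_idem]
    rw [this] at hA3
    have := Finset.card_insert_le L ({τ⁻¹ s} : Finset (Fin (n + 1)))
    simp only [Finset.card_singleton] at this
    omega
  have hd2 : τ⁻¹ L ≠ τ⁻¹ s := by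
    intro heq
    have : A = {τ⁻¹ L, L} := by
      rw [hA, ← heq]
      ext y; simp [or_comm, or_assoc, or_left_comm]
    rw [this] at hA3
    have := Finset.card_insert_le (τ⁻¹ L) ({L} : Finset (Fin (n + 1)))
    simp only [Finset.card_singleton] at this
    omega
  have hd3 : L ≠ τ⁻¹ s := by
    intro heq
    have : A = {τ⁻¹ L, L} := by
      rw [hA, ← heq]
      ext y; simp [or_comm, or_assoc, or_left_comm]
    rw [this] at hA3
    have := Finset.card_insert_le (τ⁻¹ L) ({L} : Finset (Fin (n + 1)))
    simp only [Finset.card_singleton] at this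
    omega
  have hLt : L ≠ t := by
    intro hc
    apply hd1
    conv_lhs => rw [hc, ht]
    exact Equiv.Perm.inv_apply_self τ L
  have hLs : L ≠ s := fun hc => hd2 (congrArg (fun y => τ⁻¹ y) hc)
  have hst : s ≠ t := by
    intro hc
    apply hd3
    rw [hc, ht, Equiv.Perm.inv_apply_self]
  -- the two equations from G-nonmembership
  have hq1 : σ (τ⁻¹ L) = t := by
    have := hGA (τ⁻¹ L) (by simp [hA])
    simp only [hG, Finset.mem_filter] at this
    simp only [hG, Finset.mem_filter, Finset.mem_univ, true_and, ne_eq, not_not,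
      Equiv.Perm.mul_apply, Equiv.Perm.apply_inv_self, Equiv.swap_apply_left] at this
    have h2 := congrArg (Equiv.swap L s) this
    rw [Equiv.swap_apply_self, Equiv.swap_apply_of_ne_of_ne hLt.symm (Ne.symm hst)] at h2
    exact h2
  have hq2 : σ (τ⁻¹ s) = L := by
    have := hGA (τ⁻¹ s) (by simp [hA])
    simp only [hG, Finset.mem_filter] at this
    simp only [hG, Finset.mem_filter, Finset.mem_univ, true_and, ne_eq, not_not,
      Equiv.Perm.mul_apply, Equiv.Perm.apply_inv_self] at this
    rw [Equiv.swap_apply_of_ne_of_ne hLs.symm hst] at this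
    have h2 := congrArg (Equiv.swap L s) this
    rw [Equiv.swap_apply_self, Equiv.swap_apply_right] at h2
    exact h2
  -- facts about π = τ * σ⁻¹
  set π : Equiv.Perm (Fin (n + 1)) := τ * σ⁻¹ with hπ
  have hp1 : π L = s := by
    have : σ⁻¹ L = τ⁻¹ s := by
      rw [← hq2, Equiv.Perm.inv_apply_self]
    simp only [hπ, Equiv.Perm.mul_apply, this, Equiv.Perm.apply_inv_self]
  have hp2 : π s = t := by
    simp only [hπ, Equiv.Perm.mul_apply, hs, Equiv.Perm.inv_apply_self, ← ht]
  have hp3 : π t = L := by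
    have : σ⁻¹ t = τ⁻¹ L := by rw [← hq1, Equiv.Perm.inv_apply_self]
    simp only [hπ, Equiv.Perm.mul_apply, this, Equiv.Perm.apply_inv_self]
  -- conclude
  rw [extend_contract, extend_contract, ← hL, ← hs, ← ht, mul_inv_rev, Equiv.swap_inv,
    mul_inv_rev, Equiv.swap_inv]
  have := key_swap π L s t hLs hLt hst hp1 hp2 hp3
  calc Equiv.swap L t * τ * (σ⁻¹ * Equiv.swap L s)
      = Equiv.swap L t * π * Equiv.swap L s := by rw [hπ]; group
    _ = Equiv.swap s t * (Equiv.swap L s * π) := this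
    _ = Equiv.swap s t * Equiv.swap L s * (τ * σ⁻¹) := by rw [hπ]; group
end
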